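/- arXiv:2212.10721 — 7 statements merged into one kernel-verified Lean document; each statement's English description precedes it below -/
import Mathlib

section
/- Let n ≥ 1 and a ∈ ℤ_{n+1}, and let VT_a(n) = {x ∈ {0,1}^n : Σ_{i=1}^n i·x_i ≡ a (mod n+1)}. Then VT_a(n) corrects a single deletion: for any two distinct codewords x, x̃ ∈ VT_a(n), there is no sequence z ∈ {0,1}^{n-1} that can be obtained both from x by deleting one coordinate and from x̃ by deleting one coordinate. -/
/-- VT syndrome of a sequence (1-indexed): `Syn(x) = ∑ i * x_i`. -/
def synL (l : List ℕ) : ℕ := ∑ i ∈ Finset.range l.length, (i + 1) * l.getD i 0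

/-!
Write `x = u ++ b :: w`, so that deleting `b` leaves `z = u ++ w`. Inserting `b` back raises the
syndrome by `(|u| + 1) b + wt(w)`, a number between `0` and `|x|`; hence the syndrome modulo
`|x| + 1` determines it. If `x' = u ++ s ++ b' :: w'` is another binary word with the same
syndrome and `z = u ++ s ++ w'`, comparing the two increments forces `b = b'` and `s` to be a run
of `b`'s, and moving a symbol across a run of copies of itself does not change the word.
-/

namespace List

theorem sum_range_getD (l : List ℕ) : ∑ i ∈ Finset.range l.length, l.getD i 0 = l.sum := by
  induction l with
  | nil => simp
  | cons c l ih =>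
    rw [length_cons, Finset.sum_range_succ']
    simp only [getD_cons_succ, getD_cons_zero, sum_cons, ih]
    omega

theorem sum_le_length_of_le_one {l : List ℕ} (hl : ∀ c ∈ l, c ≤ 1) : l.sum ≤ l.length := by
  simpa using l.sum_le_card_nsmul 1 hl

theorem eq_replicate_of_sum_eq_length_mul {l : List ℕ} {b : ℕ} (hl : ∀ c ∈ l, c ≤ 1)
    (hb : b ≤ 1) (h : l.sum = l.length * b) : l = replicate l.length b := by
  induction l with
  | nil => rfl
  | cons c l ih =>
    simp only [forall_mem_cons] at hl
    have hwt := sum_le_length_of_le_one hl.2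
    simp only [sum_cons, length_cons] at h
    obtain ⟨rfl, hsum⟩ : c = b ∧ l.sum = l.length * b := by
      interval_cases b <;> omega
    rw [length_cons, replicate_succ, ← ih hl.2 hsum]

theorem exists_append_cons_eq_and_eraseIdx_eq {α : Type*} {l : List α} {i : ℕ}
    (hi : i < l.length) :
    ∃ u b w, l = u ++ b :: w ∧ l.eraseIdx i = u ++ w :=
  ⟨l.take i, l[i], l.drop (i + 1), by rw [getElem_cons_drop, take_append_drop],
    eraseIdx_eq_take_drop_succ l i⟩

end List

open List

theorem synL_cons (c : ℕ) (l : List ℕ) : synL (c :: l) = c + l.sum + synL l := by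
  simp only [synL, length_cons, Finset.sum_range_succ', getD_cons_succ, getD_cons_zero,
    add_mul, Finset.sum_add_distrib, one_mul, sum_range_getD]
  ring

theorem synL_append (u v : List ℕ) : synL (u ++ v) = synL u + u.length * v.sum + synL v := by
  induction u with
  | nil => simp [synL]
  | cons c u ih =>
    simp only [cons_append, synL_cons, ih, sum_append, length_cons]
    ring

theorem synL_append_cons (u w : List ℕ) (b : ℕ) :
    synL (u ++ b :: w) = synL (u ++ w) + ((u.length + 1) * b + w.sum) := by
  simp only [synL_append, synL_cons, sum_cons]
  ring

theorem cons_append_eq_append_cons_of_sum_eq {s w : List ℕ} {b b' k : ℕ}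
    (hs : ∀ c ∈ s, c ≤ 1) (hb : b ≤ 1) (hb' : b' ≤ 1)
    (h : (k + 1) * b + s.sum = (k + s.length + 1) * b') : b :: (s ++ w) = s ++ b' :: w := by
  have hwt := sum_le_length_of_le_one hs
  obtain ⟨rfl, hsum⟩ : b = b' ∧ s.sum = s.length * b := by
    interval_cases b <;> interval_cases b' <;> omega
  rw [eq_replicate_of_sum_eq_length_mul hs hb hsum, ← cons_append, ← replicate_succ,
    replicate_succ', append_assoc, singleton_append]

theorem append_cons_append_eq_of_synL_modEq {u s w : List ℕ} {b b' m : ℕ}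
    (hz : ∀ c ∈ u ++ s ++ w, c ≤ 1) (hb : b ≤ 1) (hb' : b' ≤ 1)
    (hm : (u ++ s ++ w).length + 1 < m)
    (hsyn : synL (u ++ b :: (s ++ w)) ≡ synL (u ++ s ++ b' :: w) [MOD m]) :
    u ++ b :: (s ++ w) = u ++ s ++ b' :: w := by
  simp only [mem_append, or_imp, forall_and] at hz
  rw [synL_append_cons, synL_append_cons, append_assoc, length_append, sum_append] at hsyn
  simp only [length_append] at hm
  have hwt_s := sum_le_length_of_le_one hz.1.2
  have hwt_w := sum_le_length_of_le_one hz.2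
  have hbit := mul_le_of_le_one_right (Nat.zero_le (u.length + 1)) hb
  have hbit' := mul_le_of_le_one_right (Nat.zero_le (u.length + s.length + 1)) hb'
  have hshift : (u.length + 1) * b + (s.sum + w.sum) = (u.length + s.length + 1) * b' + w.sum :=
    (Nat.ModEq.add_left_cancel' _ hsyn).eq_of_lt_of_lt (by omega) (by omega)
  rw [append_assoc,
    cons_append_eq_append_cons_of_sum_eq (k := u.length) hz.1.2 hb hb' (by omega)]

theorem eq_of_eraseIdx_eq_of_synL_modEq {x x' : List ℕ} {i j m : ℕ}
    (hi : i < x.length) (hj : j < x'.length) (hx : ∀ c ∈ x, c ≤ 1) (hx' : ∀ c ∈ x', c ≤ 1)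
    (hm : x.length < m) (h : x.eraseIdx i = x'.eraseIdx j)
    (hsyn : synL x ≡ synL x' [MOD m]) : x = x' := by
  have hz : ∀ c ∈ x.eraseIdx i, c ≤ 1 := fun c hc => hx c ((eraseIdx_sublist x i).subset hc)
  obtain ⟨u, b, w, rfl, hdel⟩ := exists_append_cons_eq_and_eraseIdx_eq hi
  obtain ⟨u', b', w', rfl, hdel'⟩ := exists_append_cons_eq_and_eraseIdx_eq hj
  rw [hdel, hdel'] at h
  rw [hdel] at hz
  have hb : b ≤ 1 := hx b (by simp)
  have hb' : b' ≤ 1 := hx' b' (by simp)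
  rcases append_eq_append_iff.mp h with ⟨s, rfl, rfl⟩ | ⟨s, rfl, rfl⟩
  · exact append_cons_append_eq_of_synL_modEq (by simpa using hz) hb hb'
      (by simp at hm ⊢; omega) hsyn
  · exact (append_cons_append_eq_of_synL_modEq (by simpa using hz) hb' hb
      (by simp at hm ⊢; omega) hsyn.symm).symm

theorem stmt_0_general (n : ℕ) (a : ℕ)
    (x x' : List ℕ)
    (hxlen : x.length = n) (hxbin : ∀ b ∈ x, b ≤ 1) (hxsyn : synL x % (n + 1) = a)
    (hx'len : x'.length = n) (hx'bin : ∀ b ∈ x', b ≤ 1) (hx'syn : synL x' % (n + 1) = a)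
    (hne : x ≠ x') :
    ¬ ∃ z : List ℕ, (∃ i < n, z = x.eraseIdx i) ∧ (∃ i < n, z = x'.eraseIdx i) := by
  rintro ⟨z, ⟨i, hi, rfl⟩, ⟨j, hj, hz⟩⟩
  exact hne (eq_of_eraseIdx_eq_of_synL_modEq (hxlen ▸ hi) (hx'len ▸ hj) hxbin hx'bin
    (by omega) hz (hxsyn.trans hx'syn.symm))

theorem stmt_0 (n : ℕ) (hn : 1 ≤ n) (a : ℕ) (ha : a < n + 1)
    (x x' : List ℕ)
    (hxlen : x.length = n) (hxbin : ∀ b ∈ x, b ≤ 1) (hxsyn : synL x % (n + 1) = a)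
    (hx'len : x'.length = n) (hx'bin : ∀ b ∈ x', b ≤ 1) (hx'syn : synL x' % (n + 1) = a)
    (hne : x ≠ x') :
    ¬ ∃ z : List ℕ, (∃ i < n, z = x.eraseIdx i) ∧ (∃ i < n, z = x'.eraseIdx i) :=
  stmt_0_general n a x x' hxlen hxbin hxsyn hx'len hx'bin hx'syn hne
end

section
/- Let n ≥ 1 and a ∈ ℤ_{n+1}, and let VT_a(n) = {x ∈ {0,1}^n : Σ_{i=1}^n i·x_i ≡ a (mod n+1)}. Then VT_a(n) corrects a single insertion: for any two distinct codewords x, x̃ ∈ VT_a(n), there is no sequence z ∈ {0,1}^{n+1} that can be obtained both from x by inserting one bit and from x̃ by inserting one bit (equivalently, no z of length n+1 has both x and x̃ as subsequences obtained by deleting one coordinate of z). -/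
namespace List

variable {α : Type*}

theorem getD_eraseIdx (l : List α) (i k : ℕ) (d : α) :
    (l.eraseIdx i).getD k d = if k < i then l.getD k d else l.getD (k + 1) d := by
  simp only [getD_eq_getElem?_getD, getElem?_eraseIdx]
  split <;> rfl

theorem eraseIdx_eq_eraseIdx_of_getElem?_eq {l : List α} {i j : ℕ} (hij : i ≤ j)
    (h : ∀ k, i ≤ k → k ≤ j → l[k]? = l[j]?) : l.eraseIdx i = l.eraseIdx j := by
  ext1 k
  rw [getElem?_eraseIdx, getElem?_eraseIdx]
  split_ifs
  · rfl
  · omega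
  · rw [h k (by omega) (by omega), h (k + 1) (by omega) (by omega)]
  · rfl

end List

open Finset

theorem synL_eq_synL_eraseIdx_add (z : List ℕ) {i : ℕ} (hi : i < z.length) :
    synL z = synL (z.eraseIdx i) + (i + 1) * z.getD i 0
      + ∑ k ∈ Ico (i + 1) z.length, z.getD k 0 := by
  have hlen : (z.eraseIdx i).length = z.length - 1 := List.length_eraseIdx_of_lt hi
  have hz : synL z = ∑ k ∈ range i, (k + 1) * z.getD k 0 + (i + 1) * z.getD i 0
      + ∑ k ∈ Ico (i + 1) z.length, (k + 1) * z.getD k 0 := by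
    rw [synL, ← sum_range_add_sum_Ico _ hi.le, sum_eq_sum_Ico_succ_bot hi, add_assoc]
  have hzi : synL (z.eraseIdx i) = ∑ k ∈ range i, (k + 1) * z.getD k 0
      + ∑ k ∈ Ico (i + 1) z.length, k * z.getD k 0 := by
    rw [synL, hlen, ← sum_range_add_sum_Ico _ (by omega : i ≤ z.length - 1)]
    congr 1
    · refine sum_congr rfl fun k hk => ?_
      rw [List.getD_eraseIdx, if_pos (mem_range.mp hk)]
    · rw [show z.length = z.length - 1 + 1 by omega, ← sum_Ico_add']
      refine sum_congr rfl fun k hk => ?_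
      rw [List.getD_eraseIdx, if_neg (by simp at hk; omega)]
  have hsplit : ∑ k ∈ Ico (i + 1) z.length, (k + 1) * z.getD k 0
      = ∑ k ∈ Ico (i + 1) z.length, k * z.getD k 0
        + ∑ k ∈ Ico (i + 1) z.length, z.getD k 0 := by
    rw [← sum_add_distrib]
    exact sum_congr rfl fun k _ => by ring
  rw [hz, hzi, hsplit]
  ring

theorem synL_eraseIdx_add_eq (z : List ℕ) {i j : ℕ} (hij : i < j) (hj : j < z.length) :
    synL (z.eraseIdx i) + ((i + 1) * z.getD i 0 + ∑ k ∈ Ico (i + 1) j, z.getD k 0)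
      = synL (z.eraseIdx j) + j * z.getD j 0 := by
  have hi := synL_eq_synL_eraseIdx_add z (hij.trans hj)
  have hj' := synL_eq_synL_eraseIdx_add z hj
  rw [← sum_Ico_consecutive _ hij hj.le, sum_eq_sum_Ico_succ_bot hj] at hi
  linarith

section LeOne

variable {f : ℕ → ℕ} {i j : ℕ}

theorem sum_Ico_le_of_le_one (hf : ∀ k, f k ≤ 1) : ∑ k ∈ Ico i j, f k ≤ j - i := by
  simpa using sum_le_card_nsmul (Ico i j) f 1 fun k _ => hf k

theorem add_sum_Ico_le_of_le_one (hf : ∀ k, f k ≤ 1) (hij : i < j) :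
    (i + 1) * f i + ∑ k ∈ Ico (i + 1) j, f k ≤ j := by
  have := sum_Ico_le_of_le_one (i := i + 1) (j := j) hf
  have := Nat.mul_le_mul_left (i + 1) (hf i)
  omega

theorem eq_of_add_sum_Ico_eq_of_le_one (hf : ∀ k, f k ≤ 1) (hij : i < j)
    (h : (i + 1) * f i + ∑ k ∈ Ico (i + 1) j, f k = j * f j) :
    ∀ k, i ≤ k → k ≤ j → f k = f j := by
  have hends : f i = f j ∧ ∀ k ∈ Ico (i + 1) j, f k = f j := by
    obtain hj | hj : f j = 0 ∨ f j = 1 := by have := hf j; omega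
    · rw [hj, mul_zero, add_eq_zero, mul_eq_zero, sum_eq_zero_iff] at h
      rw [hj]
      exact ⟨h.1.resolve_left (Nat.succ_ne_zero i), h.2⟩
    · rw [hj, mul_one] at h
      have hS := sum_Ico_le_of_le_one (i := i + 1) (j := j) hf
      have hfi : f i = 1 := by
        obtain hi | hi : f i = 0 ∨ f i = 1 := by have := hf i; omega
        · rw [hi] at h; omega
        · exact hi
      refine ⟨hfi.trans hj.symm, fun k hk => ?_⟩
      have hsum : ∑ k ∈ Ico (i + 1) j, f k = ∑ k ∈ Ico (i + 1) j, 1 := by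
        simp only [sum_const, Nat.card_Ico, smul_eq_mul, mul_one]
        rw [hfi] at h
        omega
      rw [(sum_eq_sum_iff_of_le fun k _ => hf k).mp hsum k hk, hj]
  intro k hik hkj
  rcases hik.eq_or_lt with rfl | hik
  · exact hends.1
  rcases hkj.eq_or_lt with rfl | hkj
  · rfl
  · exact hends.2 k (mem_Ico.mpr ⟨hik, hkj⟩)

end LeOne

theorem eraseIdx_eq_eraseIdx_of_synL_modEq {z : List ℕ} (hz : ∀ b ∈ z, b ≤ 1) {i j : ℕ}
    (hij : i ≤ j) (hj : j < z.length)
    (h : synL (z.eraseIdx i) ≡ synL (z.eraseIdx j) [MOD z.length]) :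
    z.eraseIdx i = z.eraseIdx j := by
  rcases hij.eq_or_lt with rfl | hij
  · rfl
  have hf : ∀ k, z.getD k 0 ≤ 1 := fun k => by
    rw [List.getD_eq_getElem?_getD]
    cases hk : z[k]? with
    | none => exact zero_le_one
    | some b => exact hz b (List.mem_of_getElem? hk)
  have hsyn := synL_eraseIdx_add_eq z hij hj
  have hcong : (i + 1) * z.getD i 0 + ∑ k ∈ Ico (i + 1) j, z.getD k 0
      ≡ j * z.getD j 0 [MOD z.length] :=
    Nat.ModEq.add_left_cancel' (synL (z.eraseIdx i)) (by rw [hsyn]; exact h.symm.add_right _)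
  have hmod := hcong.eq_of_lt_of_lt ((add_sum_Ico_le_of_le_one hf hij).trans_lt hj)
    (by nlinarith [hf j])
  refine List.eraseIdx_eq_eraseIdx_of_getElem?_eq hij.le fun k hik hkj => ?_
  rw [List.getElem?_eq_getElem (by omega), List.getElem?_eq_getElem hj,
    ← List.getD_eq_getElem _ 0, ← List.getD_eq_getElem _ 0,
    eq_of_add_sum_Ico_eq_of_le_one hf hij hmod k hik hkj]

theorem stmt_1_general (n : ℕ) (a : ℕ)
    (x x' : List ℕ)
    (hxsyn : synL x % (n + 1) = a)
    (hx'syn : synL x' % (n + 1) = a)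
    (hne : x ≠ x') :
    ¬ ∃ z : List ℕ, z.length = n + 1 ∧ (∀ b ∈ z, b ≤ 1) ∧
        (∃ i < n + 1, z.eraseIdx i = x) ∧ (∃ i < n + 1, z.eraseIdx i = x') := by
  rintro ⟨z, hzlen, hzbin, ⟨i, hi, rfl⟩, ⟨j, hj, rfl⟩⟩
  have hmod : synL (z.eraseIdx i) ≡ synL (z.eraseIdx j) [MOD z.length] := by
    rw [hzlen]; exact hxsyn.trans hx'syn.symm
  rcases le_total i j with hij | hji
  · exact hne (eraseIdx_eq_eraseIdx_of_synL_modEq hzbin hij (hzlen ▸ hj) hmod)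
  · exact hne (eraseIdx_eq_eraseIdx_of_synL_modEq hzbin hji (hzlen ▸ hi) hmod.symm).symm

theorem stmt_1 (n : ℕ) (hn : 1 ≤ n) (a : ℕ) (ha : a < n + 1)
    (x x' : List ℕ)
    (hxlen : x.length = n) (hxbin : ∀ b ∈ x, b ≤ 1) (hxsyn : synL x % (n + 1) = a)
    (hx'len : x'.length = n) (hx'bin : ∀ b ∈ x', b ≤ 1) (hx'syn : synL x' % (n + 1) = a)
    (hne : x ≠ x') :
    ¬ ∃ z : List ℕ, z.length = n + 1 ∧ (∀ b ∈ z, b ≤ 1) ∧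
        (∃ i < n + 1, z.eraseIdx i = x) ∧ (∃ i < n + 1, z.eraseIdx i = x') :=
  stmt_1_general n a x x' hxsyn hx'syn hne
end

section
/- Let q ≥ 2, n ≥ 2, x ∈ Σ_q^n, let y = Diff(x), and let 2 ≤ i ≤ n. If x' ∈ Σ_q^{n-1} is obtained from x by deleting coordinate x_i, then Diff(x') = y_1 … y_{i-2} w y_{i+1} … y_n, where w = y_{i-1} + y_i (mod q); i.e., Diff(x') is obtained from Diff(x) by replacing the adjacent pair y_{i-1} y_i with the single symbol y_{i-1} + y_i (mod q). -/
/-! Differences telescope: `(x_j - x_{j+1}) + (x_{j+1} - x_{j+2}) ≡ x_j - x_{j+2} (mod q)`, and when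
the deleted symbol is the last one, `(x_j - x_{j+1}) + x_{j+1} ≡ x_j`, which is already reduced
because `x_j < q`. Everything else in `Diff(x)` is untouched, so an induction along the list
that peels off the leading difference suffices. -/

/-- Differential vector: `Diff(x)_i = x_i - x_{i+1} (mod q)` for `i < n`, `Diff(x)_n = x_n`. -/
def diffL (q : ℕ) (x : List ℕ) : List ℕ :=
  List.ofFn fun i : Fin x.length =>
    if i.1 + 1 < x.length then
      (((x.getD i.1 0 : ℤ) - (x.getD (i.1 + 1) 0 : ℤ)) % (q : ℤ)).toNat
    else x.getD i.1 0

@[simp] lemma diffL_nil (q : ℕ) : diffL q [] = [] := rfl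

@[simp] lemma diffL_singleton (q a : ℕ) : diffL q [a] = [a] := rfl

@[simp] lemma diffL_cons_cons (q a b : ℕ) (l : List ℕ) :
    diffL q (a :: b :: l) = (((a : ℤ) - b) % q).toNat :: diffL q (b :: l) := by
  rw [diffL, List.ofFn_succ]
  simp [diffL]

lemma toNat_emod_sub_add_toNat_emod_sub {q : ℕ} (hq : 0 < q) (a b c : ℕ) :
    ((((a : ℤ) - b) % q).toNat + (((b : ℤ) - c) % q).toNat) % q = (((a : ℤ) - c) % q).toNat := by
  have hq' : (q : ℤ) ≠ 0 := by exact_mod_cast hq.ne'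
  zify
  rw [Int.toNat_of_nonneg (Int.emod_nonneg _ hq'), Int.toNat_of_nonneg (Int.emod_nonneg _ hq'),
    Int.toNat_of_nonneg (Int.emod_nonneg _ hq'), ← Int.add_emod]
  ring_nf

lemma toNat_emod_sub_add_mod {q a : ℕ} (ha : a < q) (b : ℕ) :
    ((((a : ℤ) - b) % q).toNat + b) % q = a := by
  have hq' : (q : ℤ) ≠ 0 := by omega
  zify
  rw [Int.toNat_of_nonneg (Int.emod_nonneg _ hq'), Int.emod_add_emod, sub_add_cancel]
  exact Int.emod_eq_of_lt (by positivity) (by exact_mod_cast ha)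

theorem diffL_eraseIdx_succ {q : ℕ} :
    ∀ {x : List ℕ} {k : ℕ}, (∀ b ∈ x, b < q) → k + 1 < x.length →
      diffL q (x.eraseIdx (k + 1)) =
        (diffL q x).take k ++ [((diffL q x).getD k 0 + (diffL q x).getD (k + 1) 0) % q] ++
          (diffL q x).drop (k + 2)
  | [], _, _, hk | [_], _, _, hk => by simp at hk
  | [a, b], 0, hx, _ => by simp [toNat_emod_sub_add_mod (hx a (by simp))]
  | a :: b :: c :: rest, 0, hx, _ => by
    have hq : 0 < q := (Nat.zero_le a).trans_lt (hx a (by simp))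
    simp [toNat_emod_sub_add_toNat_emod_sub hq]
  | a :: b :: rest, k + 1, hx, hk => by
    have ih := diffL_eraseIdx_succ (x := b :: rest) (k := k)
      (fun c hc => hx c (List.mem_cons_of_mem a hc)) (by simpa using hk)
    simp only [List.eraseIdx_cons_succ] at ih ⊢
    simp [ih]

theorem stmt_7_general (q n i : ℕ) (hi1 : 2 ≤ i) (hi2 : i ≤ n)
    (x : List ℕ) (hlen : x.length = n) (hx : ∀ b ∈ x, b < q)
    (x' : List ℕ) (hdel : x' = x.eraseIdx (i - 1)) :
    diffL q x' =
      (diffL q x).take (i - 2) ++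
        [((diffL q x).getD (i - 2) 0 + (diffL q x).getD (i - 1) 0) % q] ++
        (diffL q x).drop i := by
  obtain ⟨k, rfl⟩ : ∃ k, i = k + 2 := ⟨i - 2, by omega⟩
  subst hdel
  exact diffL_eraseIdx_succ hx (by omega)

/-- Deleting the (1-indexed) coordinate `i`, `2 ≤ i ≤ n`, of `x` replaces the adjacent
pair `y_{i-1} y_i` of `y = Diff(x)` by the single symbol `y_{i-1} + y_i (mod q)`. -/
theorem stmt_7 (q n i : ℕ) (hq : 2 ≤ q) (hn : 2 ≤ n) (hi1 : 2 ≤ i) (hi2 : i ≤ n)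
    (x : List ℕ) (hlen : x.length = n) (hx : ∀ b ∈ x, b < q)
    (x' : List ℕ) (hdel : x' = x.eraseIdx (i - 1)) :
    diffL q x' =
      (diffL q x).take (i - 2) ++
        [((diffL q x).getD (i - 2) 0 + (diffL q x).getD (i - 1) 0) % q] ++
        (diffL q x).drop i :=
  stmt_7_general q n i hi1 hi2 x hlen hx x' hdel
end

section
/- Let q ≥ 2, n ≥ 1, a ∈ ℤ_{qn}, and let VT*_a(n;q) = {x ∈ Σ_q^n : Syn(Diff(x)) ≡ a (mod qn)}. If x ∈ VT*_a(n;q) and x' ∈ Σ_q^{n-1} is obtained from x by deleting coordinate x_i, then the value of the deleted symbol is determined by x': x_i ≡ a - Σ_{j=1}^{n-1} x'_j (mod q). -/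
/-!
Modulo `q` the VT syndrome of `Diff(x)` telescopes (Abel summation) to the plain sum
`∑ (i + 1) (x_i - x_{i+1}) = ∑ x_i`, so `a ≡ ∑ x_i (mod q)`. Deleting `x_i` removes exactly
`x_i` from that sum.
-/

open Finset

theorem List.sum_eq_sum_range_getD {M : Type*} [AddCommMonoid M] (l : List M) :
    l.sum = ∑ i ∈ Finset.range l.length, l.getD i 0 := by
  rw [sum_range, ← Fin.sum_univ_getElem]
  simp

theorem List.getD_add_sum_eraseIdx {M : Type*} [AddCommMonoid M] {l : List M} {i : ℕ}
    (hi : i < l.length) : l.getD i 0 + (l.eraseIdx i).sum = l.sum := by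
  rw [List.getD_eq_getElem _ _ hi, List.CommMonoid.add_sum_eraseIdx hi]

theorem Finset.sum_range_succ_mul_sub {R : Type*} [CommRing R] (f : ℕ → R) (n : ℕ) :
    ∑ i ∈ range n, ((i : R) + 1) * (f i - f (i + 1)) = ∑ i ∈ range n, f i - n * f n := by
  induction n with
  | zero => simp
  | succ n ih =>
    rw [sum_range_succ, ih, sum_range_succ]
    push_cast
    ring

theorem synL_cast {R : Type*} [CommSemiring R] (l : List ℕ) :
    (synL l : R) = ∑ i ∈ range l.length, ((i : R) + 1) * l.getD i 0 := by
  simp [synL]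

theorem length_diffL (q : ℕ) (x : List ℕ) : (diffL q x).length = x.length := by
  simp [diffL]

theorem diffL_getD_cast {q : ℕ} (hq : 0 < q) {x : List ℕ} {i : ℕ} (hi : i < x.length) :
    ((diffL q x).getD i 0 : ZMod q) = x.getD i 0 - x.getD (i + 1) 0 := by
  rw [List.getD_eq_getElem _ _ (by rwa [length_diffL])]
  simp only [diffL, List.getElem_ofFn]
  split_ifs with hlast
  · have hnonneg : 0 ≤ ((x.getD i 0 : ℤ) - x.getD (i + 1) 0) % q :=
      Int.emod_nonneg _ (by exact_mod_cast hq.ne')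
    rw [← Int.cast_natCast, Int.toNat_of_nonneg hnonneg, ZMod.intCast_mod]
    push_cast
    rfl
  · -- `i` is the last coordinate, where `Diff(x)_n = x_n` and `x_{n+1}` reads as the default `0`.
    rw [List.getD_eq_default x 0 (show x.length ≤ i + 1 by omega)]
    simp

theorem synL_diffL_modEq {q : ℕ} (hq : 0 < q) (x : List ℕ) :
    synL (diffL q x) ≡ x.sum [MOD q] := by
  rw [← ZMod.natCast_eq_natCast_iff, synL_cast, length_diffL]
  have hend : ((x.getD x.length 0 : ℕ) : ZMod q) = 0 := by
    rw [List.getD_eq_default _ _ le_rfl, Nat.cast_zero]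
  calc ∑ i ∈ range x.length, ((i : ZMod q) + 1) * ((diffL q x).getD i 0 : ℕ)
      = ∑ i ∈ range x.length, ((i : ZMod q) + 1) * (x.getD i 0 - x.getD (i + 1) 0) :=
        sum_congr rfl fun i hi => by rw [diffL_getD_cast hq (mem_range.mp hi)]
    _ = ∑ i ∈ range x.length, ((x.getD i 0 : ℕ) : ZMod q) := by
        rw [sum_range_succ_mul_sub (fun i => ((x.getD i 0 : ℕ) : ZMod q)), hend, mul_zero,
          sub_zero]
    _ = x.sum := by
        rw [List.sum_eq_sum_range_getD x, Nat.cast_sum]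

theorem stmt_9_general (q n a i : ℕ) (hq : 2 ≤ q)
    (x : List ℕ) (hlen : x.length = n)
    (hcode : synL (diffL q x) % (q * n) = a)
    (hi : i < n) (x' : List ℕ) (hdel : x' = x.eraseIdx i) :
    (x.getD i 0 + x'.sum) % q = a % q := by
  subst hdel hcode
  rw [List.getD_add_sum_eraseIdx (hlen ▸ hi), Nat.mod_mod_of_dvd _ (dvd_mul_right q n)]
  exact (synL_diffL_modEq (by omega) x).symm

/-- The deleted symbol satisfies `x_i ≡ a - ∑_j x'_j (mod q)`, equivalently
`x_i + ∑_j x'_j ≡ a (mod q)`.  (Coordinates are 0-indexed here.) -/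
theorem stmt_9 (q n a i : ℕ) (hq : 2 ≤ q) (hn : 1 ≤ n) (ha : a < q * n)
    (x : List ℕ) (hlen : x.length = n) (hx : ∀ b ∈ x, b < q)
    (hcode : synL (diffL q x) % (q * n) = a)
    (hi : i < n) (x' : List ℕ) (hdel : x' = x.eraseIdx i) :
    (x.getD i 0 + x'.sum) % q = a % q :=
  stmt_9_general q n a i hq x hlen hcode hi x' hdel
end

section
/- Let q ≥ 2, n ≥ 1, a ∈ ℤ_{qn}, and let VT*_a(n;q) = {x ∈ Σ_q^n : Syn(Diff(x)) ≡ a (mod qn)}. Then VT*_a(n;q) corrects a single insertion or a single deletion: for any two distinct codewords x, x̃ ∈ VT*_a(n;q), the sets B^InDel(x) and B^InDel(x̃) are disjoint, where B^InDel(x) is the set of all sequences obtainable from x by a single insertion or a single deletion. -/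
/-- `z` is obtained from `x` by deleting one coordinate. -/
def delOf (x z : List ℕ) : Prop := ∃ i < x.length, z = x.eraseIdx i

/-- `B^InDel(x)`: all `q`-ary sequences obtained from `x` by a single deletion or a
single insertion. -/
def inDelBall (q : ℕ) (x : List ℕ) : Set (List ℕ) :=
  {z | (∀ b ∈ z, b < q) ∧ (delOf x z ∨ delOf z x)}


/-!
Write `Y = Diff x` as digits in `[0, q)`. Deleting `x_i` merges `Y_{i-1}, Y_i` into their sum
mod `q`, which lowers `Syn` by `i q c + (Y_i + ⋯ + Y_{n-1})`, `c ∈ {0, 1}` being the carry.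
If one word `z` of length `n + 1` yields both `x` and `x'` by deleting positions `i' < i`, the two
losses agree mod `q n`; their difference `q (i c - i' c') - (Z_{i'} + ⋯ + Z_{i-1})` lies in
`(-q n, q n]`, and size bounds force the digits `Z_{i'}, …, Z_{i-1}` to vanish. Merging anywhere
inside a run of zeros gives the same sequence, so `Diff x = Diff x'` and `x = x'`.
Two deletions reduce to this case: if `x` and `x'` share a subsequence obtained by one deletion
each, they share a supersequence obtained by one insertion each.
-/

namespace VT

open Finset

def IsDigits (q : ℕ) (Y : ℕ → ℤ) : Prop := ∀ j, 0 ≤ Y j ∧ Y j < q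

def syn (n : ℕ) (Y : ℕ → ℤ) : ℤ := ∑ j ∈ range n, ((j : ℤ) + 1) * Y j

def carry (q i : ℕ) (Y : ℕ → ℤ) : ℤ := if (q : ℤ) ≤ Y (i - 1) + Y i then 1 else 0

/-- Deleting the `i`-th symbol of `x` replaces the digits `Y (i - 1), Y i` of `Diff x` by
their sum mod `q` (for `i = 0` it just drops `Y 0`); `W` is the result. -/
structure IsMerge (q i : ℕ) (Y W : ℕ → ℤ) : Prop where
  apply_of_lt : ∀ j, j + 1 < i → W j = Y j
  apply_pred : ∀ j, j + 1 = i → W j = (Y j + Y (j + 1)) % q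
  apply_of_ge : ∀ j, i ≤ j → W j = Y (j + 1)

/-- The syndrome lost by the merge at `i`: every digit from `i` on moves down one place, and the
merged digit, of weight `i`, loses the carry `q`. -/
def synDrop (q n i : ℕ) (Y : ℕ → ℤ) : ℤ := i * q * carry q i Y + ∑ k ∈ Ico i n, Y k

/-- `q * (i * c - i' * c') - M` lies in `(-q n, q n]`, and equals neither `0` nor `q n`
when `M > 0`. -/
theorem eq_zero_of_dvd_of_le_mul_pred {q n i i' c c' M : ℤ} (hq : 2 ≤ q) (hn : 1 ≤ n)
    (hi : i ≤ n) (hii : i' < i) (hi' : 0 ≤ i') (hc : c = 0 ∨ c = 1) (hc' : c' = 0 ∨ c' = 1)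
    (hM : 0 ≤ M) (hM' : M ≤ (i - i') * (q - 1)) (hd : q * n ∣ q * (i * c - i' * c') - M) :
    M = 0 := by
  obtain ⟨d, hd⟩ := hd
  have hlo : -(q * n) < q * n * d := by
    rcases hc' with rfl | rfl <;> rcases hc with rfl | rfl <;> nlinarith
  have hhi : q * n * d ≤ q * n := by
    rcases hc' with rfl | rfl <;> rcases hc with rfl | rfl <;> nlinarith
  have hqn : 0 < q * n := by positivity
  obtain rfl | rfl : d = 0 ∨ d = 1 := by
    have : -1 < d := lt_of_mul_lt_mul_left (by linarith) hqn.le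
    have : d ≤ 1 := le_of_mul_le_mul_left (by linarith) hqn
    omega
  all_goals rcases hc' with rfl | rfl <;> rcases hc with rfl | rfl <;> nlinarith

section Digits

variable {q : ℕ} {Y W : ℕ → ℤ}

theorem carry_eq_zero_or_one (i : ℕ) : carry q i Y = 0 ∨ carry q i Y = 1 := by
  unfold carry; split_ifs <;> simp

theorem IsDigits.sum_Ico_le (hY : IsDigits q Y) {a b : ℕ} (hab : a ≤ b) :
    ∑ k ∈ Ico a b, Y k ≤ ((b : ℤ) - a) * (q - 1) := by
  have := sum_le_card_nsmul (Ico a b) Y ((q : ℤ) - 1) fun j _ => by have := (hY j).2; omega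
  rwa [Nat.card_Ico, nsmul_eq_mul, Nat.cast_sub hab] at this

theorem IsMerge.apply_eq_sub_carry {k : ℕ} (h : IsMerge q (k + 1) Y W) (hY : IsDigits q Y) :
    W k = Y k + Y (k + 1) - q * carry q (k + 1) Y := by
  obtain ⟨h0, h1⟩ := hY k
  obtain ⟨h2, h3⟩ := hY (k + 1)
  rw [h.apply_pred k rfl, carry, Nat.add_sub_cancel]
  split_ifs with hc
  · rw [← Int.sub_emod_right, Int.emod_eq_of_lt (by omega) (by omega)]; ring
  · rw [Int.emod_eq_of_lt (by omega) (by omega)]; ring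

theorem IsMerge.right_unique {i : ℕ} {W' : ℕ → ℤ} (h : IsMerge q i Y W) (h' : IsMerge q i Y W') :
    W = W' := by
  funext j
  rcases lt_trichotomy (j + 1) i with hj | hj | hj
  · rw [h.apply_of_lt j hj, h'.apply_of_lt j hj]
  · rw [h.apply_pred j hj, h'.apply_pred j hj]
  · rw [h.apply_of_ge j (by omega), h'.apply_of_ge j (by omega)]

theorem IsMerge.eq_of_eq_zero_on_Ico {i i' : ℕ} {W' : ℕ → ℤ} (hY : IsDigits q Y) (hii : i' < i)
    (hzero : ∀ m ∈ Ico i' i, Y m = 0) (h : IsMerge q i Y W) (h' : IsMerge q i' Y W') :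
    W = W' := by
  have hzero' : ∀ m, i' ≤ m → m < i → Y m = 0 := fun m h1 h2 => hzero m (mem_Ico.2 ⟨h1, h2⟩)
  funext j
  rcases (by omega : j + 1 < i' ∨ j + 1 = i' ∨ (i' ≤ j ∧ j + 1 < i) ∨ j + 1 = i ∨ i ≤ j)
    with hj | hj | ⟨hj1, hj2⟩ | hj | hj
  · rw [h.apply_of_lt j (by omega), h'.apply_of_lt j hj]
  · rw [h.apply_of_lt j (by omega), h'.apply_pred j hj, hzero' (j + 1) (by omega) (by omega),
      add_zero, Int.emod_eq_of_lt (hY j).1 (hY j).2]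
  · rw [h.apply_of_lt j (by omega), h'.apply_of_ge j hj1, hzero' j (by omega) (by omega),
      hzero' (j + 1) (by omega) (by omega)]
  · rw [h.apply_pred j hj, h'.apply_of_ge j (by omega), hzero' j (by omega) (by omega), zero_add,
      Int.emod_eq_of_lt (hY (j + 1)).1 (hY (j + 1)).2]
  · rw [h.apply_of_ge j hj, h'.apply_of_ge j (by omega)]

end Digits

section Syndrome

variable {q n : ℕ} {Y W : ℕ → ℤ}

theorem syn_eq_of_isMerge_zero (h : IsMerge q 0 Y W) :
    syn (n + 1) Y = syn n W + synDrop q (n + 1) 0 Y := by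
  rw [syn, syn, synDrop, sum_range_succ', ← range_eq_Ico, sum_range_succ' (fun k => Y k)]
  simp only [h.apply_of_ge _ (Nat.zero_le _), Nat.cast_add, Nat.cast_one, add_mul, one_mul,
    sum_add_distrib]
  push_cast
  ring

theorem syn_eq_of_isMerge_succ {k : ℕ} (hk : k + 1 < n) (hY : IsDigits q Y)
    (h : IsMerge q (k + 1) Y W) :
    syn n Y = syn (n - 1) W + synDrop q n (k + 1) Y := by
  obtain ⟨m, rfl⟩ : ∃ m, n = k + 2 + m := ⟨n - (k + 2), by omega⟩
  have hY_split : syn (k + 2 + m) Y = ∑ j ∈ range k, ((j : ℤ) + 1) * Y j + (k + 1) * Y k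
      + (k + 2) * Y (k + 1) + ∑ j ∈ range m, ((k : ℤ) + 2 + j + 1) * Y (k + 2 + j) := by
    rw [syn, sum_range_add, sum_range_succ, sum_range_succ]; push_cast; ring
  have hW_split : syn (k + 1 + m) W = ∑ j ∈ range k, ((j : ℤ) + 1) * Y j + (k + 1) * W k
      + ∑ j ∈ range m, ((k : ℤ) + 2 + j) * Y (k + 2 + j) := by
    have hhead : ∀ j ∈ range k, ((j : ℤ) + 1) * W j = ((j : ℤ) + 1) * Y j := fun j hj => by
      rw [h.apply_of_lt j (by simpa using hj)]
    have htail : ∀ j ∈ range m, ((↑(k + 1 + j) : ℤ) + 1) * W (k + 1 + j)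
        = ((k : ℤ) + 2 + j) * Y (k + 2 + j) := fun j _ => by
      rw [h.apply_of_ge _ (by omega), show k + 1 + j + 1 = k + 2 + j by omega]; push_cast; ring
    rw [syn, sum_range_add, sum_range_succ, sum_congr rfl hhead, sum_congr rfl htail]
  have hdrop : synDrop q (k + 2 + m) (k + 1) Y
      = (k + 1) * q * carry q (k + 1) Y + Y (k + 1) + ∑ j ∈ range m, Y (k + 2 + j) := by
    rw [synDrop, sum_Ico_eq_sum_range, show k + 2 + m - (k + 1) = m + 1 by omega, sum_range_succ']
    simp only [show ∀ j, k + 1 + (j + 1) = k + 2 + j from fun j => by omega]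
    push_cast; ring
  rw [show k + 2 + m - 1 = k + 1 + m by omega, hY_split, hW_split, hdrop, h.apply_eq_sub_carry hY]
  simp only [add_mul (_ + _ : ℤ) 1, one_mul, sum_add_distrib]
  ring

theorem syn_eq_syn_add_synDrop {i : ℕ} (hi : i ≤ n) (hY : IsDigits q Y) (h : IsMerge q i Y W) :
    syn (n + 1) Y = syn n W + synDrop q (n + 1) i Y := by
  rcases i with _ | k
  · exact syn_eq_of_isMerge_zero h
  · simpa using syn_eq_of_isMerge_succ (n := n + 1) (by omega) hY h

theorem synDrop_sub_synDrop {i i' : ℕ} (hii : i' ≤ i) (hi : i ≤ n) :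
    synDrop q n i Y - synDrop q n i' Y
      = q * (i * carry q i Y - i' * carry q i' Y) - ∑ k ∈ Ico i' i, Y k := by
  rw [synDrop, synDrop, ← sum_Ico_consecutive Y hii hi]
  ring

theorem IsMerge.eq_of_syn_modEq {i i' : ℕ} {W' : ℕ → ℤ} (hq : 2 ≤ q) (hn : 1 ≤ n)
    (hY : IsDigits q Y) (hi : i ≤ n) (hi' : i' ≤ n) (h : IsMerge q i Y W)
    (h' : IsMerge q i' Y W') (hsyn : syn n W ≡ syn n W' [ZMOD q * n]) : W = W' := by
  wlog hii : i' < i generalizing i i' W W'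
  · rcases (not_lt.1 hii).lt_or_eq with hlt | rfl
    · exact (this hi' hi h' h hsyn.symm hlt).symm
    · exact h.right_unique h'
  have hdvd := hsyn.dvd
  rw [show syn n W' - syn n W = synDrop q (n + 1) i Y - synDrop q (n + 1) i' Y by
      linarith [syn_eq_syn_add_synDrop hi hY h, syn_eq_syn_add_synDrop hi' hY h'],
    synDrop_sub_synDrop hii.le (by omega)] at hdvd
  have hsum : ∑ k ∈ Ico i' i, Y k = 0 :=
    eq_zero_of_dvd_of_le_mul_pred (by exact_mod_cast hq) (by exact_mod_cast hn)
      (by exact_mod_cast hi) (by exact_mod_cast hii) (by positivity) (carry_eq_zero_or_one _)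
      (carry_eq_zero_or_one _) (sum_nonneg fun k _ => (hY k).1) (hY.sum_Ico_le hii.le) hdvd
  exact h.eq_of_eq_zero_on_Ico hY hii ((sum_eq_zero_iff_of_nonneg fun k _ => (hY k).1).1 hsum) h'

end Syndrome

/-- `Diff x` as a sequence of integers; the last entry `x_n - 0` agrees with `Diff(x)_n = x_n`
because `x_n < q`, and the sequence vanishes beyond the length of `x`. -/
def diffSeq (q : ℕ) (x : List ℕ) (j : ℕ) : ℤ := ((x.getD j 0 : ℤ) - x.getD (j + 1) 0) % q

section Lists

variable {q : ℕ} {x x' : List ℕ}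

theorem isDigits_diffSeq (hq : 0 < q) (x : List ℕ) : IsDigits q (diffSeq q x) := fun _ =>
  ⟨Int.emod_nonneg _ (by omega), Int.emod_lt_of_pos _ (by omega)⟩

theorem getD_lt (hxq : ∀ b ∈ x, b < q) {j : ℕ} (hj : j < x.length) : x.getD j 0 < q := by
  rw [List.getD_eq_getElem _ _ hj]
  exact hxq _ (List.getElem_mem hj)

theorem synL_diffL (hxq : ∀ b ∈ x, b < q) :
    (synL (diffL q x) : ℤ) = syn x.length (diffSeq q x) := by
  have hlen : (diffL q x).length = x.length := by simp [diffL]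
  rw [synL, syn, hlen]
  push_cast
  refine sum_congr rfl fun j hj => ?_
  rw [mem_range] at hj
  have hxj := getD_lt hxq hj
  rw [List.getD_eq_getElem _ _ (hlen ▸ hj), diffSeq]
  simp only [diffL, List.getElem_ofFn]
  split_ifs with h
  · rw [Int.toNat_of_nonneg (Int.emod_nonneg _ (by omega))]
  · rw [List.getD_eq_default x 0 (show x.length ≤ j + 1 by omega), Nat.cast_zero, sub_zero,
      Int.emod_eq_of_lt (by positivity) (by exact_mod_cast hxj)]

theorem isMerge_diffSeq_eraseIdx (q : ℕ) (x : List ℕ) (i : ℕ) :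
    IsMerge q i (diffSeq q x) (diffSeq q (x.eraseIdx i)) := by
  have hget : ∀ j, (x.eraseIdx i).getD j 0 = if j < i then x.getD j 0 else x.getD (j + 1) 0 :=
    fun j => by simp only [List.getD_eq_getElem?_getD, List.getElem?_eraseIdx]; split_ifs <;> rfl
  refine ⟨fun j hj => ?_, fun j hj => ?_, fun j hj => ?_⟩
  · simp only [diffSeq, hget, show j < i by omega, show j + 1 < i by omega, if_true]
  · simp only [diffSeq, hget, show j < i by omega, show ¬ j + 1 < i by omega, if_true, if_false]
    rw [← Int.add_emod]
    ring_nf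
  · simp only [diffSeq, hget, show ¬ j < i by omega, show ¬ j + 1 < i by omega, if_false]

theorem getD_eq_sum_diffSeq (hxq : ∀ b ∈ x, b < q) {j : ℕ} (hj : j < x.length) :
    (x.getD j 0 : ℤ) = (∑ k ∈ Ico j x.length, diffSeq q x k) % q := by
  have htele := sum_Ico_sub (fun k => -(x.getD k 0 : ℤ)) hj.le
  simp only [neg_sub_neg, List.getD_eq_default _ _ le_rfl, Nat.cast_zero, neg_zero,
    zero_sub, neg_neg] at htele
  simp only [diffSeq]
  rw [← sum_int_mod, htele, Int.emod_eq_of_lt (by positivity) (by exact_mod_cast getD_lt hxq hj)]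

theorem eq_of_diffSeq_eq (hxq : ∀ b ∈ x, b < q) (hx'q : ∀ b ∈ x', b < q)
    (hlen : x.length = x'.length) (h : diffSeq q x = diffSeq q x') : x = x' := by
  refine List.ext_getElem hlen fun j hj hj' => ?_
  have := getD_eq_sum_diffSeq hxq hj
  rw [h, hlen, ← getD_eq_sum_diffSeq hx'q hj', List.getD_eq_getElem _ _ hj,
    List.getD_eq_getElem _ _ hj'] at this
  exact_mod_cast this

theorem _root_.List.exists_eraseIdx_eq_of_eraseIdx_eq {α : Type*} {x x' : List α} {i i' : ℕ}
    (hi : i < x.length) (hi' : i' < x'.length) (h : x.eraseIdx i = x'.eraseIdx i') :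
    ∃ w : List α, ∃ j < w.length, ∃ j' < w.length,
      w.eraseIdx j = x ∧ w.eraseIdx j' = x' ∧ ∀ b ∈ w, b ∈ x ∨ b ∈ x' := by
  wlog hii : i' ≤ i generalizing x x' i i'
  · obtain ⟨w, j, hj, j', hj', hw, hw', hmem⟩ := this hi' hi h.symm (by omega)
    exact ⟨w, j', hj', j, hj, hw', hw, fun b hb => (hmem b hb).symm⟩
  have hlen := congrArg List.length h
  rw [List.length_eraseIdx_of_lt hi, List.length_eraseIdx_of_lt hi'] at hlen
  have hwlen : (x.insertIdx i' x'[i']).length = x.length + 1 := by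
    rw [List.length_insertIdx, if_pos (by omega)]
  refine ⟨x.insertIdx i' x'[i'], i', by omega, i + 1, by omega, List.eraseIdx_insertIdx_self _,
    ?_, fun b hb => ?_⟩
  · rw [← List.insertIdx_eraseIdx_of_le hi hii, h, List.insertIdx_eraseIdx_getElem hi']
  · rcases (List.mem_insertIdx (by omega)).1 hb with rfl | hb
    · exact Or.inr (List.getElem_mem _)
    · exact Or.inl hb

theorem eraseIdx_eq_of_syn_modEq {n i i' : ℕ} {z : List ℕ} (hq : 2 ≤ q) (hn : 1 ≤ n)
    (hzq : ∀ b ∈ z, b < q) (hz : z.length = n + 1) (hi : i < z.length) (hi' : i' < z.length)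
    (hsyn : syn n (diffSeq q (z.eraseIdx i)) ≡ syn n (diffSeq q (z.eraseIdx i')) [ZMOD q * n]) :
    z.eraseIdx i = z.eraseIdx i' :=
  eq_of_diffSeq_eq (fun b hb => hzq b ((z.eraseIdx_sublist i).subset hb))
    (fun b hb => hzq b ((z.eraseIdx_sublist i').subset hb))
    (by rw [List.length_eraseIdx_of_lt hi, List.length_eraseIdx_of_lt hi'])
    ((isMerge_diffSeq_eraseIdx q z i).eq_of_syn_modEq hq hn (isDigits_diffSeq (by omega) z)
      (by omega) (by omega) (isMerge_diffSeq_eraseIdx q z i') hsyn)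

end Lists

end VT

open VT in
theorem stmt_14_general (q n a : ℕ) (hq : 2 ≤ q) (hn : 1 ≤ n)
    (x x' : List ℕ)
    (hxlen : x.length = n) (hxq : ∀ b ∈ x, b < q)
    (hx'len : x'.length = n) (hx'q : ∀ b ∈ x', b < q)
    (hxsyn : synL (diffL q x) % (q * n) = a)
    (hx'syn : synL (diffL q x') % (q * n) = a)
    (hne : x ≠ x') :
    inDelBall q x ∩ inDelBall q x' = ∅ := by
  have hsyn : syn n (diffSeq q x) ≡ syn n (diffSeq q x') [ZMOD q * n] := by
    have h := congrArg (Nat.cast : ℕ → ℤ) (hxsyn.trans hx'syn.symm)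
    push_cast at h
    rwa [synL_diffL hxq, synL_diffL hx'q, hxlen, hx'len] at h
  refine Set.eq_empty_iff_forall_notMem.2 fun z hz => hne ?_
  obtain ⟨⟨hzq, hxz⟩, -, hx'z⟩ := hz
  rcases hxz with ⟨i, hi, rfl⟩ | ⟨i, hi, rfl⟩ <;> rcases hx'z with ⟨i', hi', hz⟩ | ⟨i', hi', rfl⟩
  · obtain ⟨w, j, hj, j', hj', rfl, rfl, hw⟩ := List.exists_eraseIdx_eq_of_eraseIdx_eq hi hi' hz
    exact eraseIdx_eq_of_syn_modEq hq hn (fun b hb => (hw b hb).elim (hxq b) (hx'q b))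
      (by rw [List.length_eraseIdx_of_lt hj] at hxlen; omega) hj hj' hsyn
  · rw [List.length_eraseIdx_of_lt hi', List.length_eraseIdx_of_lt hi] at hx'len
    omega
  · rw [List.length_eraseIdx_of_lt hi, hz, List.length_eraseIdx_of_lt hi'] at hxlen
    omega
  · exact eraseIdx_eq_of_syn_modEq hq hn hzq (by rw [List.length_eraseIdx_of_lt hi] at hxlen; omega)
      hi hi' hsyn

theorem stmt_14 (q n a : ℕ) (hq : 2 ≤ q) (hn : 1 ≤ n) (ha : a < q * n)
    (x x' : List ℕ)
    (hxlen : x.length = n) (hxq : ∀ b ∈ x, b < q)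
    (hx'len : x'.length = n) (hx'q : ∀ b ∈ x', b < q)
    (hxsyn : synL (diffL q x) % (q * n) = a)
    (hx'syn : synL (diffL q x') % (q * n) = a)
    (hne : x ≠ x') :
    inDelBall q x ∩ inDelBall q x' = ∅ :=
  stmt_14_general q n a hq hn x x' hxlen hxq hx'len hx'q hxsyn hx'syn hne
end

section
/- Let q ≥ 2, n ≥ 1, and let p be an integer with 1 ≤ p ≤ q-1 and gcd(p,q) = 1. Define the p-transformation Γ_p(x) ∈ Σ_q^n of x ∈ Σ_q^n by Γ_p(x)_i = p·(x_i - x_{i+1}) (mod q) for 1 ≤ i ≤ n-1 and Γ_p(x)_n = p·x_n (mod q). Then for every a ∈ ℤ_{qn}, the code {x ∈ Σ_q^n : Syn(Γ_p(x)) ≡ a (mod qn)} corrects a single deletion: for any two distinct codewords x, x̃, no sequence z ∈ Σ_q^{n-1} can be obtained both from x by deleting one coordinate and from x̃ by deleting one coordinate. -/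
/-- `p`-transformation vector: `Γ_p(x)_i = p(x_i - x_{i+1}) (mod q)` for `i < n`, and
`Γ_p(x)_n = p·x_n (mod q)`. -/
def gammaL (q p : ℕ) (x : List ℕ) : List ℕ :=
  List.ofFn fun i : Fin x.length =>
    if i.1 + 1 < x.length then
      (((p : ℤ) * ((x.getD i.1 0 : ℤ) - (x.getD (i.1 + 1) 0 : ℤ))) % (q : ℤ)).toNat
    else (p * x.getD i.1 0) % q

/-!
Write `y = Γ_p(x)`. Deleting `x_k` turns `y` into the word `w` obtained by merging `y_{k-1}`
and `y_k` into `y_{k-1} + y_k - q ε`, where `ε ∈ {0, 1}` is the carry (for `k = 0`, `y_0` is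
just dropped). The syndrome then drops by the defect `y_k + ∑_{j ≥ k} w_j + k q ε`, which lies
in `[0, qn)`; hence two codewords with a common deletion `z` have equal defects over the same `w`.
For equal positions this forces equal carries and equal `y_k`, which determines `y`. For
positions `k < k'` the merge at `k'` leaves an equation whose left side is too small to absorb
a carry at `k'`, and then all its terms vanish: `y` is zero on `[k, k')`, so it is also a merge
of `w` at `k'` without carry, and we are back in the first case. Finally `Γ_p` is injective on
`Σ_q^n` because `p` is a unit modulo `q`.
-/

open Finset

structure IsMerge (q n k : ℕ) (y w : ℕ → ℕ) (ε : ℕ) : Prop where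
  eq_of_lt : ∀ j, j + 1 < k → w j = y j
  eq_of_ge : ∀ j, k ≤ j → j + 1 < n → w j = y (j + 1)
  merge : 1 ≤ k → w (k - 1) + q * ε = y (k - 1) + y k

namespace IsMerge

variable {q n k : ℕ} {y w : ℕ → ℕ} {ε : ℕ}

lemma sum_range_mul_eq (h : IsMerge q n k y w ε) :
    ∑ j ∈ range k, (j + 1) * w j + k * q * ε = ∑ i ∈ range k, (i + 1) * y i + k * y k := by
  cases k with
  | zero => simp
  | succ t =>
    have hprefix : ∑ j ∈ range t, (j + 1) * w j = ∑ j ∈ range t, (j + 1) * y j :=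
      sum_congr rfl fun j hj => by rw [h.eq_of_lt j (by simpa using hj)]
    have hmerge := h.merge (by omega)
    simp only [add_tsub_cancel_right] at hmerge
    rw [sum_range_succ, sum_range_succ, hprefix]
    linear_combination (t + 1) * hmerge

lemma sum_Ico_mul_eq (h : IsMerge q n k y w ε) (hk : k < n) :
    ∑ j ∈ Ico k (n - 1), (j + 1) * w j + ∑ j ∈ Ico k (n - 1), w j =
      ∑ i ∈ Ico (k + 1) n, (i + 1) * y i := by
  rw [← sum_add_distrib, show n = n - 1 + 1 by omega, ← sum_Ico_add', Nat.add_sub_cancel]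
  refine sum_congr rfl fun j hj => ?_
  rw [mem_Ico] at hj
  rw [h.eq_of_ge j hj.1 (by omega)]
  ring

theorem sum_range_mul_eq_add_defect (h : IsMerge q n k y w ε) (hk : k < n) :
    ∑ i ∈ range n, (i + 1) * y i =
      ∑ j ∈ range (n - 1), (j + 1) * w j + (y k + ∑ j ∈ Ico k (n - 1), w j + k * q * ε) := by
  rw [← sum_range_add_sum_Ico _ hk.le, sum_eq_sum_Ico_succ_bot hk,
    ← sum_range_add_sum_Ico _ (by omega : k ≤ n - 1), ← h.sum_Ico_mul_eq hk]
  linarith [h.sum_range_mul_eq]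

lemma carry_le_one (h : IsMerge q n k y w ε) (hk1 : 1 ≤ k) (hk : k < n) (hy : ∀ i < n, y i < q) :
    ε ≤ 1 := by
  have := h.merge hk1
  have := hy (k - 1) (by omega)
  have := hy k hk
  nlinarith

lemma mul_carry_le (h : IsMerge q n k y w ε) (hk : k < n) (hy : ∀ i < n, y i < q) :
    k * q * ε ≤ k * q := by
  rcases Nat.eq_zero_or_pos k with rfl | hk1
  · simp
  · simpa using Nat.mul_le_mul_left (k * q) (h.carry_le_one hk1 hk hy)

lemma sum_Ico_le (h : IsMerge q n k y w ε) (hy : ∀ i < n, y i < q) {a b : ℕ} (ha : k ≤ a)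
    (hb : b + 1 ≤ n) : ∑ j ∈ Ico a b, w j ≤ (b - a) * q := by
  refine (sum_le_card_nsmul _ _ q fun j hj => ?_).trans_eq (by simp)
  rw [mem_Ico] at hj
  rw [h.eq_of_ge j (by omega) (by omega)]
  exact (hy _ (by omega)).le

theorem defect_lt (h : IsMerge q n k y w ε) (hk : k < n) (hy : ∀ i < n, y i < q) :
    y k + ∑ j ∈ Ico k (n - 1), w j + k * q * ε < q * n := by
  have hsum := h.sum_Ico_le hy le_rfl (b := n - 1) (by omega)
  have hε := h.mul_carry_le hk hy
  have hyk := hy k hk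
  have : (1 + (n - 1 - k) + k) * q = q * n := by
    rw [show 1 + (n - 1 - k) + k = n by omega, mul_comm]
  nlinarith

variable {k' : ℕ} {y' : ℕ → ℕ} {ε' : ℕ}

lemma eqOn_of_apply_eq (h : IsMerge q n k y w ε) (h' : IsMerge q n k y' w ε') (hk : y k = y' k)
    (hε : 1 ≤ k → ε = ε') : Set.EqOn y y' (Set.Iio n) := by
  intro i hi
  rw [Set.mem_Iio] at hi
  rcases lt_trichotomy (i + 1) k with hik | rfl | hik
  · rw [← h.eq_of_lt i hik, h'.eq_of_lt i hik]
  · have hm := h.merge (by omega)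
    have hm' := h'.merge (by omega)
    rw [hε (by omega), add_tsub_cancel_right] at *
    omega
  · rcases (show k ≤ i by omega).eq_or_lt with rfl | hki
    · exact hk
    · obtain ⟨j, rfl⟩ : ∃ j, i = j + 1 := ⟨i - 1, by omega⟩
      rw [← h.eq_of_ge j (by omega) hi, h'.eq_of_ge j (by omega) hi]

lemma move_of_eq_zero (h : IsMerge q n k y w ε) (hkk' : k < k') (hk' : k' < n)
    (hε : k * q * ε = 0) (hzero : ∀ i, k ≤ i → i < k' → y i = 0) : IsMerge q n k' y w 0 where
  eq_of_lt j hj := by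
    rcases lt_trichotomy (j + 1) k with hjk | rfl | hjk
    · exact h.eq_of_lt j hjk
    · have hm := h.merge (by omega)
      rw [hzero (j + 1) le_rfl hkk', add_tsub_cancel_right] at hm
      have : q * ε = 0 := by simpa using hε
      omega
    · rw [h.eq_of_ge j (by omega) (by omega), hzero j (by omega) (by omega),
        hzero (j + 1) hjk.le hj]
  eq_of_ge j hj := h.eq_of_ge j (by omega)
  merge _ := by
    rw [h.eq_of_ge (k' - 1) (by omega) (by omega), hzero (k' - 1) (by omega) (by omega),
      Nat.sub_add_cancel (by omega : 1 ≤ k')]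
    simp

lemma eq_zero_of_defect_eq (h : IsMerge q n k y w ε) (h' : IsMerge q n k' y' w ε')
    (hkk' : k < k') (hk' : k' < n) (hy : ∀ i < n, y i < q) (hy' : ∀ i < n, y' i < q)
    (hD : y k + ∑ j ∈ Ico k (n - 1), w j + k * q * ε =
      y' k' + ∑ j ∈ Ico k' (n - 1), w j + k' * q * ε') :
    ε' = 0 ∧ k * q * ε = 0 ∧ y k = 0 ∧ y' (k' - 1) = 0 ∧ ∀ j ∈ Ico k (k' - 1), w j = 0 := by
  have hsplit : ∑ j ∈ Ico k (n - 1), w j =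
      ∑ j ∈ Ico k (k' - 1), w j + w (k' - 1) + ∑ j ∈ Ico k' (n - 1), w j := by
    rw [← sum_Ico_succ_top (by omega), Nat.sub_add_cancel (by omega : 1 ≤ k'),
      sum_Ico_consecutive _ hkk'.le (by omega)]
  have hm' := h'.merge (by omega)
  have hcarry :
      y k + ∑ j ∈ Ico k (k' - 1), w j + y' (k' - 1) + k * q * ε = (k' + 1) * q * ε' := by
    linarith
  have hε' : ε' = 0 := by
    by_contra hne
    have hS := h.sum_Ico_le hy le_rfl (b := k' - 1) (by omega)
    have := h.mul_carry_le (by omega) hy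
    have := hy k (by omega)
    have := hy' (k' - 1) (by omega)
    have : (1 + (k' - 1 - k) + 1 + k) * q = (k' + 1) * q := by
      rw [show 1 + (k' - 1 - k) + 1 + k = k' + 1 by omega]
    have : (k' + 1) * q ≤ (k' + 1) * q * ε' := Nat.le_mul_of_pos_right _ (by omega)
    nlinarith
  subst hε'
  simp only [mul_zero] at hcarry
  exact ⟨rfl, by omega, by omega, by omega, sum_eq_zero_iff.1 (by omega)⟩

theorem eqOn_of_defect_eq (h : IsMerge q n k y w ε) (h' : IsMerge q n k' y' w ε')
    (hkk' : k ≤ k') (hk' : k' < n) (hy : ∀ i < n, y i < q) (hy' : ∀ i < n, y' i < q)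
    (hD : y k + ∑ j ∈ Ico k (n - 1), w j + k * q * ε =
      y' k' + ∑ j ∈ Ico k' (n - 1), w j + k' * q * ε') :
    Set.EqOn y y' (Set.Iio n) := by
  rcases hkk'.eq_or_lt with rfl | hlt
  · have hyk := hy k hk'
    have hy'k := hy' k hk'
    have hε : 1 ≤ k → ε = ε' := fun hk1 => by
      have := h.carry_le_one hk1 hk' hy
      have := h'.carry_le_one hk1 hk' hy'
      have : q ≤ k * q := Nat.le_mul_of_pos_left q hk1
      interval_cases ε <;> interval_cases ε' <;> omega
    refine h.eqOn_of_apply_eq h' ?_ hε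
    rcases Nat.eq_zero_or_pos k with rfl | hk1
    · simpa using hD
    · rw [hε hk1] at hD
      omega
  · obtain ⟨rfl, hε, hyk, hy'k, hw⟩ := h.eq_zero_of_defect_eq h' hlt hk' hy hy' hD
    have hzero : ∀ i, k ≤ i → i < k' → y i = 0 := fun i hki hik => by
      rcases hki.eq_or_lt with rfl | hki
      · exact hyk
      · rw [← Nat.sub_add_cancel (by omega : 1 ≤ i), ← h.eq_of_ge (i - 1) (by omega) (by omega)]
        exact hw _ (mem_Ico.2 ⟨by omega, by omega⟩)
    have hmove := h.move_of_eq_zero hlt hk' hε hzero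
    refine hmove.eqOn_of_apply_eq h' ?_ fun _ => rfl
    have hm := hmove.merge (by omega)
    have hm' := h'.merge (by omega)
    rw [hzero (k' - 1) (by omega) (by omega)] at hm
    omega

end IsMerge

namespace List

variable {α : Type*} {l : List α} {d : α} {k j : ℕ}

lemma getD_eraseIdx_of_lt (h : j < k) : (l.eraseIdx k).getD j d = l.getD j d := by
  simp only [getD_eq_getElem?_getD, getElem?_eraseIdx_of_lt h]

lemma getD_eraseIdx_of_ge (h : k ≤ j) : (l.eraseIdx k).getD j d = l.getD (j + 1) d := by
  simp only [getD_eq_getElem?_getD, getElem?_eraseIdx_of_ge h]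

lemma getD_lt_of_forall_lt {l : List ℕ} {q i : ℕ} (hl : ∀ b ∈ l, b < q) (hi : i < l.length) :
    l.getD i 0 < q := by
  rw [getD_eq_getElem _ _ hi]
  exact hl _ (getElem_mem hi)

end List

def gammaEntry (q p a b : ℕ) : ℕ := ((p : ZMod q) * (a - b)).val

lemma gammaL_length (q p : ℕ) (x : List ℕ) : (gammaL q p x).length = x.length := by
  simp [gammaL]

section Gamma

variable {q p : ℕ} [NeZero q]

lemma gammaEntry_lt (a b : ℕ) : gammaEntry q p a b < q := ZMod.val_lt _

lemma gammaEntry_add_mod (a b c : ℕ) :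
    (gammaEntry q p a b + gammaEntry q p b c) % q = gammaEntry q p a c := by
  rw [gammaEntry, gammaEntry, gammaEntry, ← ZMod.val_add]
  ring_nf

lemma gammaEntry_left_injective (hpq : Nat.gcd p q = 1) {a b c : ℕ} (ha : a < q) (hb : b < q)
    (h : gammaEntry q p a c = gammaEntry q p b c) : a = b := by
  have h := (ZMod.unitOfCoprime p hpq).isUnit.mul_left_cancel (ZMod.val_injective q h)
  rw [sub_left_inj] at h
  rw [← ZMod.val_natCast_of_lt ha, ← ZMod.val_natCast_of_lt hb, h]

/-- Past the end `x.getD` is `0`, so this covers the last entry `p x_n mod q` as well. -/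
lemma getD_gammaL {x : List ℕ} {i : ℕ} (hi : i < x.length) :
    (gammaL q p x).getD i 0 = gammaEntry q p (x.getD i 0) (x.getD (i + 1) 0) := by
  rw [List.getD_eq_getElem _ _ (by rwa [gammaL_length]), gammaEntry]
  simp only [gammaL, List.getElem_ofFn]
  split_ifs with h
  · rw [← ZMod.val_intCast, Int.toNat_natCast]
    push_cast
    rfl
  · rw [List.getD_eq_default x 0 (show x.length ≤ i + 1 by omega), Nat.cast_zero, sub_zero,
      ← Nat.cast_mul, ZMod.val_natCast]

lemma getD_gammaL_lt (x : List ℕ) (i : ℕ) : (gammaL q p x).getD i 0 < q := by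
  rcases lt_or_ge i x.length with hi | hi
  · rw [getD_gammaL hi]
    exact gammaEntry_lt _ _
  · rw [List.getD_eq_default _ _ (by rwa [gammaL_length])]
    exact NeZero.pos q

lemma isMerge_gammaL_eraseIdx {x : List ℕ} {k : ℕ} (hk : k < x.length) :
    IsMerge q x.length k (fun i => (gammaL q p x).getD i 0)
      (fun j => (gammaL q p (x.eraseIdx k)).getD j 0)
      (((gammaL q p x).getD (k - 1) 0 + (gammaL q p x).getD k 0) / q) where
  eq_of_lt j hj := by
    rw [getD_gammaL (by rw [List.length_eraseIdx_of_lt hk]; omega), getD_gammaL (by omega),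
      List.getD_eraseIdx_of_lt (by omega), List.getD_eraseIdx_of_lt hj]
  eq_of_ge j hkj hj := by
    rw [getD_gammaL (by rw [List.length_eraseIdx_of_lt hk]; omega), getD_gammaL hj,
      List.getD_eraseIdx_of_ge hkj, List.getD_eraseIdx_of_ge (by omega)]
  merge hk1 := by
    have hw : (gammaL q p (x.eraseIdx k)).getD (k - 1) 0 =
        ((gammaL q p x).getD (k - 1) 0 + (gammaL q p x).getD k 0) % q := by
      rw [getD_gammaL (by rw [List.length_eraseIdx_of_lt hk]; omega), getD_gammaL (by omega),
        getD_gammaL hk, Nat.sub_add_cancel hk1, gammaEntry_add_mod,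
        List.getD_eraseIdx_of_lt (by omega), List.getD_eraseIdx_of_ge le_rfl]
    simp only [hw, Nat.mod_add_div]

theorem eq_of_gammaL_eq (hpq : Nat.gcd p q = 1) {x x' : List ℕ} (hlen : x.length = x'.length)
    (hx : ∀ b ∈ x, b < q) (hx' : ∀ b ∈ x', b < q) (h : gammaL q p x = gammaL q p x') :
    x = x' := by
  have hsuffix : ∀ d i, i + d = x.length → x.getD i 0 = x'.getD i 0 := by
    intro d
    induction d with
    | zero =>
      intro i hi
      rw [List.getD_eq_default _ _ (by omega), List.getD_eq_default _ _ (by omega)]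
    | succ d ih =>
      intro i hi
      have hi' := congrArg (·.getD i 0) h
      rw [getD_gammaL (by omega), getD_gammaL (by omega), ih (i + 1) (by omega)] at hi'
      exact gammaEntry_left_injective hpq (List.getD_lt_of_forall_lt hx (by omega))
        (List.getD_lt_of_forall_lt hx' (by omega)) hi'
  refine List.ext_getElem hlen fun i h1 h2 => ?_
  simpa [List.getD_eq_getElem, h1, h2] using hsuffix (x.length - i) i (by omega)

end Gamma

theorem eq_of_eraseIdx_eq_of_synL_modEq_s17 {q p k k' : ℕ} [NeZero q] (hpq : Nat.gcd p q = 1)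
    {x x' : List ℕ} (hlen : x'.length = x.length) (hx : ∀ b ∈ x, b < q)
    (hx' : ∀ b ∈ x', b < q) (hkk' : k ≤ k') (hk' : k' < x.length)
    (hz : x.eraseIdx k = x'.eraseIdx k')
    (hsyn : synL (gammaL q p x) ≡ synL (gammaL q p x') [MOD q * x.length]) : x = x' := by
  have hm := isMerge_gammaL_eraseIdx (q := q) (p := p) (by omega : k < x.length)
  have hm' := isMerge_gammaL_eraseIdx (q := q) (p := p) (by omega : k' < x'.length)
  rw [← hz, hlen] at hm'
  have hy (l : List ℕ) : ∀ i < x.length, (gammaL q p l).getD i 0 < q :=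
    fun i _ => getD_gammaL_lt l i
  rw [synL, synL, gammaL_length, gammaL_length, hlen, hm.sum_range_mul_eq_add_defect (by omega),
    hm'.sum_range_mul_eq_add_defect hk'] at hsyn
  have hD := (Nat.ModEq.add_left_cancel' _ hsyn).eq_of_lt_of_lt
    (hm.defect_lt (by omega) (hy x)) (hm'.defect_lt hk' (hy x'))
  have hγ := hm.eqOn_of_defect_eq hm' hkk' hk' (hy x) (hy x') hD
  refine eq_of_gammaL_eq hpq hlen.symm hx hx' (List.ext_getElem (by simp [gammaL_length, hlen])
    fun i h1 h2 => ?_)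
  have hi : (gammaL q p x).getD i 0 = (gammaL q p x').getD i 0 :=
    hγ (Set.mem_Iio.2 (by rwa [gammaL_length] at h1))
  rwa [List.getD_eq_getElem _ _ h1, List.getD_eq_getElem _ _ h2] at hi

theorem stmt_17_general (q n p a : ℕ) (hq : 2 ≤ q)
    (hpq : Nat.gcd p q = 1)
    (x x' : List ℕ)
    (hxlen : x.length = n) (hxq : ∀ b ∈ x, b < q)
    (hx'len : x'.length = n) (hx'q : ∀ b ∈ x', b < q)
    (hxsyn : synL (gammaL q p x) % (q * n) = a)
    (hx'syn : synL (gammaL q p x') % (q * n) = a)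
    (hne : x ≠ x') :
    ¬ ∃ z : List ℕ, (∃ i < n, z = x.eraseIdx i) ∧ (∃ i < n, z = x'.eraseIdx i) := by
  have : NeZero q := ⟨by omega⟩
  rintro ⟨z, ⟨k, hk, rfl⟩, k', hk', hz⟩
  have hsyn : synL (gammaL q p x) ≡ synL (gammaL q p x') [MOD q * n] := hxsyn.trans hx'syn.symm
  subst hxlen
  rcases le_total k k' with hkk' | hk'k
  · exact hne (eq_of_eraseIdx_eq_of_synL_modEq_s17 hpq hx'len hxq hx'q hkk' hk' hz hsyn)
  · rw [← hx'len] at hk hsyn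
    exact hne (eq_of_eraseIdx_eq_of_synL_modEq_s17 hpq hx'len.symm hx'q hxq hk'k hk hz.symm
      hsyn.symm).symm

theorem stmt_17 (q n p a : ℕ) (hq : 2 ≤ q) (hn : 1 ≤ n)
    (hp1 : 1 ≤ p) (hp2 : p ≤ q - 1) (hpq : Nat.gcd p q = 1) (ha : a < q * n)
    (x x' : List ℕ)
    (hxlen : x.length = n) (hxq : ∀ b ∈ x, b < q)
    (hx'len : x'.length = n) (hx'q : ∀ b ∈ x', b < q)
    (hxsyn : synL (gammaL q p x) % (q * n) = a)
    (hx'syn : synL (gammaL q p x') % (q * n) = a)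
    (hne : x ≠ x') :
    ¬ ∃ z : List ℕ, (∃ i < n, z = x.eraseIdx i) ∧ (∃ i < n, z = x'.eraseIdx i) :=
  stmt_17_general q n p a hq hpq x x' hxlen hxq hx'len hx'q hxsyn hx'syn hne
end

section
/- Let q ≥ 2, n ≥ 2, set t = ⌈log_q n⌉, and assume t + 1 ≤ n. Then for every a ∈ ℤ_{qn}, the code VT*_a(n;q) = {x ∈ Σ_q^n : Syn(Diff(x)) ≡ a (mod qn)} has cardinality at least q^{n - t - 1}; i.e., there is an injective map from Σ_q^{n-t-1} into VT*_a(n;q) (realized by Encoder 2: fill the message symbols of y = Diff(c) into the positions outside S = {q^{j-1} : 1 ≤ j ≤ t} ∪ {n}, choose the symbols of y at positions in S to achieve Syn(y) ≡ a (mod qn), and output c = Diff^{-1}(y)). -/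
/-!
`Diff` is invertible on `q`-ary words, so it suffices to count words `y` with
`Syn(y) ≡ a (mod qn)`. Since `n ≤ q^t`, every residue `r < qn` has a mixed-radix expansion
`r = ∑_{j<t} d_j q^j + d_t n` with digits `d_j < q`. Placing these digits at the `t + 1`
positions `1, q, …, q^(t-1), n` therefore corrects the syndrome of any word to `a`, whatever
the symbols at the remaining `n - t - 1` positions are; the latter thus embed injectively.
-/

/-- VT syndrome of `y : Fin n → ℕ` (1-indexed): `Syn(y) = ∑ i * y_i`. -/
def synV {n : ℕ} (y : Fin n → ℕ) : ℕ := ∑ i : Fin n, (i.1 + 1) * y i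

/-- Differential vector of `x : Fin n → Fin q`, with values in `{0,…,q-1} ⊆ ℕ`:
`Diff(x)_i = x_i - x_{i+1} (mod q)` for `i < n`, `Diff(x)_n = x_n`. -/
def diffV (q n : ℕ) (x : Fin n → Fin q) : Fin n → ℕ := fun i =>
  if h : i.1 + 1 < n then
    ((((x i : ℕ) : ℤ) - ((x ⟨i.1 + 1, h⟩ : ℕ) : ℤ)) % (q : ℤ)).toNat
  else (x i : ℕ)

open Finset Function

theorem Nat.sum_range_pow_mul_div_pow_mod (q s t : ℕ) :
    ∑ j ∈ range t, q ^ j * (s / q ^ j % q) = s % q ^ t := by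
  induction t with
  | zero => simp [Nat.mod_one]
  | succ t ih => rw [sum_range_succ, ih, Nat.mod_pow_succ]

theorem Nat.exists_lt_add_mod_eq (s : ℕ) {M a : ℕ} (ha : a < M) :
    ∃ r < M, (s + r) % M = a := by
  refine ⟨(a + (M - s % M)) % M, Nat.mod_lt _ (by omega), ?_⟩
  have hs : s % M < M := Nat.mod_lt _ (by omega)
  rw [Nat.add_mod_mod, ← Nat.mod_add_mod, show s % M + (a + (M - s % M)) = a + M by omega,
    Nat.add_mod_right, Nat.mod_eq_of_lt ha]

theorem exists_mixedRadix_repr {q n t r : ℕ} (hn : n ≤ q ^ t) (hr : r < q * n) :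
    ∃ c : Fin (t + 1) → ℕ, (∀ j, c j < q) ∧
      ∑ j : Fin t, q ^ (j : ℕ) * c j.castSucc + n * c (Fin.last t) = r := by
  have hq : 0 < q := Nat.pos_of_mul_pos_right (r.zero_le.trans_lt hr)
  have hn₀ : 0 < n := Nat.pos_of_mul_pos_left (r.zero_le.trans_lt hr)
  refine ⟨Fin.snoc (fun j : Fin t => r % n / q ^ (j : ℕ) % q) (r / n), fun j => ?_, ?_⟩
  · cases j using Fin.lastCases with
    | last => simpa using Nat.div_lt_of_lt_mul (by rwa [mul_comm])
    | cast j => simpa using Nat.mod_lt _ hq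
  · simp only [Fin.snoc_castSucc, Fin.snoc_last]
    rw [Fin.sum_univ_eq_sum_range (fun j => q ^ j * (r % n / q ^ j % q)),
      Nat.sum_range_pow_mul_div_pow_mod, Nat.mod_eq_of_lt ((Nat.mod_lt r hn₀).trans_le hn),
      Nat.mod_add_div]

theorem synV_add {n : ℕ} (y z : Fin n → ℕ) : synV (y + z) = synV y + synV z := by
  simp only [synV, Pi.add_apply, mul_add, sum_add_distrib]

theorem synV_extend {k n : ℕ} {e : Fin k → Fin n} (he : Injective e) (c : Fin k → ℕ) :
    synV (extend e c 0) = ∑ j, ((e j : ℕ) + 1) * c j := by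
  classical
  rw [synV, ← sum_add_sum_compl (univ.image e), sum_image he.injOn]
  have hoff : ∀ i ∈ (univ.image e)ᶜ, ((i : ℕ) + 1) * extend e c 0 i = 0 := fun i hi => by
    rw [extend_apply' _ _ _ (by simpa using hi), Pi.zero_apply, mul_zero]
  simp only [he.extend_apply, sum_eq_zero hoff, add_zero]

theorem Fin.sum_Ici_eq_add_sum_Ici {M : Type*} [AddCommMonoid M] {n : ℕ} (y : Fin n → M)
    (i : Fin n) (h : i.1 + 1 < n) :
    ∑ j ∈ Ici i, y j = y i + ∑ j ∈ Ici ⟨i.1 + 1, h⟩, y j := by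
  rw [Ici_eq_cons_Ioi, Finset.sum_cons]
  congr 2
  ext j
  simp only [mem_Ioi, mem_Ici, Fin.lt_def, Fin.le_def]
  omega

theorem Fin.sum_Ici_of_add_one_eq {M : Type*} [AddCommMonoid M] {n : ℕ} (y : Fin n → M)
    (i : Fin n) (h : i.1 + 1 = n) :
    ∑ j ∈ Ici i, y j = y i := by
  rw [show Ici i = {i} by ext j; simp only [mem_Ici, mem_singleton, Fin.le_def, Fin.ext_iff]; omega,
    sum_singleton]

section DiffInverse

variable {q n : ℕ}

def diffInv (hq : 0 < q) (y : Fin n → ℕ) : Fin n → Fin q :=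
  fun i => ⟨(∑ j ∈ Ici i, y j) % q, Nat.mod_lt _ hq⟩

@[simp]
theorem val_diffInv (hq : 0 < q) (y : Fin n → ℕ) (i : Fin n) :
    (diffInv hq y i : ℕ) = (∑ j ∈ Ici i, y j) % q := rfl

theorem diffV_diffInv (hq : 0 < q) {y : Fin n → ℕ} (hy : ∀ i, y i < q) :
    diffV q n (diffInv hq y) = y := by
  funext i
  by_cases h : i.1 + 1 < n
  · rw [diffV, dif_pos h, val_diffInv, val_diffInv, Fin.sum_Ici_eq_add_sum_Ici y i h]
    push_cast
    rw [← Int.sub_emod, add_sub_cancel_right,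
      Int.emod_eq_of_lt (by positivity) (by exact_mod_cast hy i), Int.toNat_natCast]
  · rw [diffV, dif_neg h, val_diffInv, Fin.sum_Ici_of_add_one_eq y i (by omega),
      Nat.mod_eq_of_lt (hy i)]

end DiffInverse

def IsCheckSet (q n : ℕ) (S : Finset (Fin n)) : Prop :=
  ∀ r < q * n, ∃ v : Fin n → ℕ, (∀ i, v i < q) ∧ (∀ i ∉ S, v i = 0) ∧ synV v = r

section CheckPositions

variable {q n : ℕ} (hq : 1 < q) (hn : 0 < n)

/-- Encoder 2's check positions `S = {q^j : j < t} ∪ {n}`, shifted to `0`-indexing. -/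
def checkPos : Fin (Nat.clog q n + 1) → Fin n :=
  Fin.snoc (α := fun _ => Fin n)
    (fun j => ⟨q ^ (j : ℕ) - 1, by have := (Nat.lt_clog_iff_pow_lt hq).1 j.2; omega⟩)
    ⟨n - 1, by omega⟩

theorem checkPos_castSucc_add_one (j : Fin (Nat.clog q n)) :
    (checkPos hq hn j.castSucc : ℕ) + 1 = q ^ (j : ℕ) := by
  simp only [checkPos, Fin.snoc_castSucc]
  have := Nat.one_le_pow (j : ℕ) q (by omega)
  omega

theorem checkPos_last_add_one : (checkPos hq hn (Fin.last _) : ℕ) + 1 = n := by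
  simp only [checkPos, Fin.snoc_last]
  omega

theorem checkPos_injective : Injective (checkPos hq hn) := by
  have hpos (j : ℕ) : 1 ≤ q ^ j := Nat.one_le_pow j q (by omega)
  refine Fin.snoc_injective_iff.2 ⟨fun i j hij => ?_, ?_⟩
  · have hij : q ^ (i : ℕ) - 1 = q ^ (j : ℕ) - 1 := congrArg Fin.val hij
    refine Fin.ext (Nat.pow_right_injective hq ?_)
    have := hpos i
    have := hpos j
    show q ^ (i : ℕ) = q ^ (j : ℕ)
    omega
  · rintro ⟨j, hj⟩
    have hj : q ^ (j : ℕ) - 1 = n - 1 := congrArg Fin.val hj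
    have := (Nat.lt_clog_iff_pow_lt hq).1 j.2
    have := hpos j
    omega

theorem isCheckSet_image_checkPos : IsCheckSet q n (univ.image (checkPos hq hn)) := by
  intro r hr
  obtain ⟨c, hc, hsum⟩ := exists_mixedRadix_repr (Nat.le_pow_clog hq n) hr
  have hinj := checkPos_injective hq hn
  refine ⟨extend (checkPos hq hn) c 0, fun i => ?_, fun i hi => ?_, ?_⟩
  · by_cases h : ∃ j, checkPos hq hn j = i
    · obtain ⟨j, rfl⟩ := h
      rw [hinj.extend_apply]
      exact hc j
    · rw [extend_apply' _ _ _ h]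
      exact zero_lt_one.trans hq
  · rw [extend_apply' _ _ _ (by simpa using hi), Pi.zero_apply]
  · rw [synV_extend hinj, Fin.sum_univ_castSucc, checkPos_last_add_one]
    simpa only [checkPos_castSucc_add_one] using hsum

end CheckPositions

section Encoder

variable {q n : ℕ} {S : Finset (Fin n)}

theorem IsCheckSet.exists_codeword_diffV_eq (hS : IsCheckSet q n S) {a : ℕ} (ha : a < q * n)
    (m : ↥Sᶜ → Fin q) :
    ∃ x : Fin n → Fin q,
      synV (diffV q n x) % (q * n) = a ∧ ∀ i : ↥Sᶜ, diffV q n x i = m i := by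
  have hq : 0 < q := Nat.pos_of_mul_pos_right (a.zero_le.trans_lt ha)
  let u : Fin n → ℕ := fun i => if h : i ∈ Sᶜ then m ⟨i, h⟩ else 0
  obtain ⟨r, hr, hur⟩ := Nat.exists_lt_add_mod_eq (synV u) ha
  obtain ⟨v, hvq, hvS, hvr⟩ := hS r hr
  have hy : ∀ i, (u + v) i < q := by
    intro i
    by_cases hi : i ∈ S
    · simp [u, hi, hvq]
    · simp [u, hi, hvS i hi]
  refine ⟨diffInv hq (u + v), ?_, fun i => ?_⟩
  · rw [diffV_diffInv hq hy, synV_add, hvr, hur]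
  · rw [diffV_diffInv hq hy, Pi.add_apply, hvS i (mem_compl.1 i.2), add_zero]
    exact dif_pos i.2

theorem IsCheckSet.pow_card_compl_le_card_code (hS : IsCheckSet q n S) {a : ℕ} (ha : a < q * n) :
    q ^ #Sᶜ ≤ #{x : Fin n → Fin q | synV (diffV q n x) % (q * n) = a} := by
  choose E hE using hS.exists_codeword_diffV_eq ha
  have hinj : Injective E := fun m m' h =>
    funext fun i => Fin.ext (by rw [← (hE m).2 i, ← (hE m').2 i, h])
  calc q ^ #Sᶜ = #(univ : Finset (↥Sᶜ → Fin q)) := by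
        rw [card_univ, Fintype.card_fun, Fintype.card_fin, Fintype.card_coe]
    _ ≤ _ := card_le_card_of_injOn E (fun m _ => by simpa using (hE m).1) hinj.injOn

end Encoder

theorem stmt_19_general (q n : ℕ) (hq : 2 ≤ q) :
    ∀ a : ℕ, a < q * n →
      q ^ (n - Nat.clog q n - 1) ≤
        ((Finset.univ : Finset (Fin n → Fin q)).filter
          (fun x => synV (diffV q n x) % (q * n) = a)).card := by
  intro a ha
  have hn : 0 < n := Nat.pos_of_mul_pos_left (a.zero_le.trans_lt ha)
  have hcard : #(univ.image (checkPos hq hn))ᶜ = n - Nat.clog q n - 1 := by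
    rw [card_compl, card_image_of_injective _ (checkPos_injective hq hn), card_univ,
      Fintype.card_fin, Fintype.card_fin, Nat.sub_sub]
  rw [← hcard]
  exact (isCheckSet_image_checkPos hq hn).pow_card_compl_le_card_code ha

/-- With `t = ⌈log_q n⌉ = Nat.clog q n` and `t + 1 ≤ n`, the code `VT*_a(n;q)` has at
least `q^(n-t-1)` codewords (Encoder 2 injects `Σ_q^(n-t-1)` into it). -/
theorem stmt_19 (q n : ℕ) (hq : 2 ≤ q) (hn : 2 ≤ n)
    (ht : Nat.clog q n + 1 ≤ n) :
    ∀ a : ℕ, a < q * n →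
      q ^ (n - Nat.clog q n - 1) ≤
        ((Finset.univ : Finset (Fin n → Fin q)).filter
          (fun x => synV (diffV q n x) % (q * n) = a)).card :=
  stmt_19_general q n hq
end
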